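/- arXiv:1801.08900 — 6 statements merged into one kernel-verified Lean document; each statement's English description precedes it below -/
import Mathlib

section
/- If G is a topological group, then its fundamental groupoid π(G) is a group-groupoid: the multiplication on objects is the group multiplication of G, the multiplication on morphisms is given by pointwise multiplication of paths, [a]·[b] = [t ↦ a(t)b(t)], and with these operations all groupoid structure maps are group homomorphisms; in particular the interchange law ([a][b]) ∘ ([c][d]) = ([a]∘[c])([b]∘[d]) holds whenever the composites are defined. -/
/- Every structure map of `π(G)` is induced by a continuous map (multiplication `G × G → G`,
inversion, the unit), so all identities follow from the corresponding identities of paths,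
which hold pointwise because they hold in `G`. The interchange law is functoriality of
`π` applied to the product of paths and then to multiplication. -/

attribute [local instance] Path.Homotopic.setoid

variable {G : Type*} [TopologicalSpace G] [Group G] [IsTopologicalGroup G]

/-- Pointwise multiplication of homotopy classes of paths in a topological
group: `[a]·[b] = [t ↦ a(t)b(t)]`. -/
noncomputable def pmulQ {a b c d : G} (p : Path.Homotopic.Quotient a b)
    (q : Path.Homotopic.Quotient c d) : Path.Homotopic.Quotient (a * c) (b * d) :=
  (Path.Homotopic.prod p q).map ⟨fun z => z.1 * z.2, continuous_mul⟩

/-- The total morphism set of the fundamental groupoid `π(G)`. -/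
abbrev PiMor (G : Type*) [TopologicalSpace G] :=
  Σ (x : G) (y : G), Path.Homotopic.Quotient x y

theorem Path.Homotopic.Quotient.map_trans {X Y : Type*} [TopologicalSpace X]
    [TopologicalSpace Y] {x₀ x₁ x₂ : X} (p : Path.Homotopic.Quotient x₀ x₁)
    (q : Path.Homotopic.Quotient x₁ x₂) (f : C(X, Y)) :
    (p.trans q).map f = (p.map f).trans (q.map f) := by
  induction p, q using Path.Homotopic.Quotient.ind₂ with
  | mk p q => exact congrArg Path.Homotopic.Quotient.mk (p.map_trans q f.continuous)

namespace PiMor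

theorem ind {X : Type*} [TopologicalSpace X] {motive : PiMor X → Prop}
    (mk : ∀ (a b : X) (p : Path a b), motive ⟨a, b, ⟦p⟧⟩) (f : PiMor X) : motive f := by
  obtain ⟨a, b, p⟩ := f
  induction p with
  | mk p => exact mk a b p

theorem mk_eq_mk_of_apply {X : Type*} [TopologicalSpace X] {a b a' b' : X} {p : Path a b}
    {p' : Path a' b'} (h : ∀ t, p t = p' t) : (⟨a, b, ⟦p⟧⟩ : PiMor X) = ⟨a', b', ⟦p'⟧⟩ := by
  obtain rfl : a = a' := by simpa using h 0
  obtain rfl : b = b' := by simpa using h 1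
  obtain rfl : p = p' := Path.ext (funext h)
  rfl

section

-- Only local instances: global ones would override the `Group` bound by `letI` in the main theorem.
@[reducible] noncomputable def instMul : Mul (PiMor G) :=
  ⟨fun f g => ⟨f.1 * g.1, f.2.1 * g.2.1, pmulQ f.2.2 g.2.2⟩⟩

@[reducible] def instOne : One (PiMor G) :=
  ⟨⟨1, 1, ⟦Path.refl 1⟧⟩⟩

@[reducible] noncomputable def instInv : Inv (PiMor G) :=
  ⟨fun f => ⟨f.1⁻¹, f.2.1⁻¹, f.2.2.map ⟨Inv.inv, continuous_inv⟩⟩⟩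

attribute [local instance] instMul instOne instInv

theorem mk_mul_mk {a b c d : G} (p : Path a b) (q : Path c d) :
    (⟨a, b, ⟦p⟧⟩ * ⟨c, d, ⟦q⟧⟩ : PiMor G) = ⟨a * c, b * d, ⟦p.mul q⟧⟩ :=
  rfl

@[reducible] noncomputable def instGroup : Group (PiMor G) where
  mul_assoc := ind fun _ _ p => ind fun _ _ q => ind fun _ _ r =>
    mk_eq_mk_of_apply fun t => mul_assoc (p t) (q t) (r t)
  one_mul := ind fun _ _ p => mk_eq_mk_of_apply fun t => one_mul (p t)
  mul_one := ind fun _ _ p => mk_eq_mk_of_apply fun t => mul_one (p t)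
  inv_mul_cancel := ind fun _ _ p => mk_eq_mk_of_apply fun t => inv_mul_cancel (p t)

end

end PiMor

theorem pmulQ_trans {a b c a' b' c' : G} (p : Path.Homotopic.Quotient a b)
    (r : Path.Homotopic.Quotient b c) (q : Path.Homotopic.Quotient a' b')
    (s : Path.Homotopic.Quotient b' c') :
    pmulQ (p.trans r) (q.trans s) = (pmulQ p q).trans (pmulQ r s) := by
  rw [pmulQ, ← Path.Homotopic.comp_prod_eq_prod_comp, Path.Homotopic.Quotient.map_trans]
  rfl

/-- If `G` is a topological group, then its fundamental groupoid `π(G)` is a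
group-groupoid: the multiplication on objects is that of `G`, the
multiplication on morphisms is pointwise multiplication of paths,
`[a]·[b] = [t ↦ a(t)b(t)]`, the source, target and identity-assigning maps
are group homomorphisms, and the interchange law
`([a][b]) ∘ ([c][d]) = ([a]∘[c])([b]∘[d])` holds whenever the composites are
defined. -/
theorem fundamentalGroupoid_of_topGroup_is_group_groupoid :
    ∃ inst : Group (PiMor G), letI : Group (PiMor G) := inst;
      -- the group product of morphisms is pointwise multiplication of paths
      (∀ p q : PiMor G,
        p * q = ⟨p.1 * q.1, p.2.1 * q.2.1, pmulQ p.2.2 q.2.2⟩) ∧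
      -- the unit is the constant path at the unit of G
      ((1 : PiMor G) = ⟨1, 1, ⟦Path.refl (1 : G)⟧⟩) ∧
      -- the source and target maps are group homomorphisms
      (∀ p q : PiMor G, (p * q).1 = p.1 * q.1) ∧
      (∀ p q : PiMor G, (p * q).2.1 = p.2.1 * q.2.1) ∧
      -- the identity-assigning map ε is a group homomorphism
      (∀ x y : G, (⟨x * y, x * y, ⟦Path.refl (x * y)⟧⟩ : PiMor G) =
        (⟨x, x, ⟦Path.refl x⟧⟩ : PiMor G) * (⟨y, y, ⟦Path.refl y⟧⟩ : PiMor G)) ∧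
      -- the interchange law
      (∀ (a b c a' b' c' : G) (p : Path.Homotopic.Quotient a b)
        (r : Path.Homotopic.Quotient b c) (q : Path.Homotopic.Quotient a' b')
        (s : Path.Homotopic.Quotient b' c'),
        pmulQ (p.trans r) (q.trans s) = (pmulQ p q).trans (pmulQ r s)) :=
  ⟨PiMor.instGroup, fun _ _ => rfl, rfl, fun _ _ => rfl, fun _ _ => rfl,
    fun x y => (PiMor.mk_eq_mk_of_apply fun _ => rfl).trans
      (PiMor.mk_mul_mk (Path.refl x) (Path.refl y)).symm,
    fun _ _ _ _ _ _ => pmulQ_trans⟩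
end

section
/- In a groupoid G with object space a topological space, the set Γ(G) of admissible local sections forms an inverse semigroup under the product (st)(x) = s(x) ∘ t(βs(x)), with the inverse of s given by s⁻¹: βs(D_s) → G, βs(x) ↦ (s(x))⁻¹. -/
/-- A (small, single-type) groupoid: morphisms `M`, objects `O`.  The
composition `comp g h` (read in diagrammatic order, `g` followed by `h`)
is a total function which is only meaningful when `tgt g = src h`. -/
structure Grpd' (O M : Type*) where
  src : M → O
  tgt : M → O
  e : O → M
  comp : M → M → M
  inv : M → M
  src_e : ∀ x, src (e x) = x
  tgt_e : ∀ x, tgt (e x) = x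
  src_comp : ∀ g h, tgt g = src h → src (comp g h) = src g
  tgt_comp : ∀ g h, tgt g = src h → tgt (comp g h) = tgt h
  comp_assoc : ∀ g h k, tgt g = src h → tgt h = src k →
    comp (comp g h) k = comp g (comp h k)
  id_comp : ∀ g, comp (e (src g)) g = g
  comp_id : ∀ g, comp g (e (tgt g)) = g
  src_inv : ∀ g, src (inv g) = tgt g
  tgt_inv : ∀ g, tgt (inv g) = src g
  comp_inv : ∀ g, comp g (inv g) = e (src g)
  inv_comp : ∀ g, comp (inv g) g = e (tgt g)

/-- A group-groupoid: a groupoid whose objects and morphisms carry group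
structures such that the group multiplication, inversion and unit maps are
morphisms of groupoids; equivalently, the source, target and identity maps
are group homomorphisms and the interchange law holds. -/
structure GrpGrpd (O M : Type*) [Group O] [Group M] extends Grpd' O M where
  src_mul : ∀ g h : M, src (g * h) = src g * src h
  tgt_mul : ∀ g h : M, tgt (g * h) = tgt g * tgt h
  e_mul : ∀ x y : O, e (x * y) = e x * e y
  interchange : ∀ g h k l : M, tgt g = src k → tgt h = src l →
    comp (g * h) (k * l) = comp g k * comp h l

/-- An admissible local section of a groupoid `G` with topologized object
space: a partially defined function `σ` (encoded with values in `Option M`)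
on an open subset `U` of the objects such that `α(σ(x)) = x` on `U`, the
image `βσ(U)` is open, and `βσ` maps `U` homeomorphically onto `βσ(U)`
(encoded as: `βσ` is an open embedding of the domain). -/
structure ALS {O M : Type*} (G : Grpd' O M) [TopologicalSpace O] where
  f : O → Option M
  src_eq : ∀ x g, f x = some g → G.src g = x
  isOpen_dom : IsOpen {x : O | (f x).isSome}
  isOpenEmbedding_tgt :
    Topology.IsOpenEmbedding (fun p : {x : O // (f x).isSome} => G.tgt ((f p.1).get p.2))

/-- The product formula for admissible local sections:
`(st)(x) = s(x) ∘ t(βs(x))`, defined where both factors are defined. -/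
def ALS.mulFun {O M : Type*} {G : Grpd' O M} [TopologicalSpace O]
    (s t : ALS G) : O → Option M :=
  fun x => (s.f x).bind fun g => (t.f (G.tgt g)).map fun h => G.comp g h

/-!
The product `st` is admissible because its domain is the preimage of `D_t` under the open
embedding `βs`, and `β(st) = βt ∘ βs` there. Injectivity of `βs` makes `βs(x) ↦ s(x)⁻¹` a well
defined section, admissible because `βs` is a homeomorphism onto its open image. For uniqueness,
if `sts = s` then at `x ∈ D_s` the arrow `s(x) t(βs x) s(y)` equals `s(x)`, so `βs y = βs x`,
hence `y = x` and `t(βs x) = s(x)⁻¹` by cancellation in the groupoid; `tst = t` then shows that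
`t` is defined nowhere else.
-/

namespace Grpd'

variable {O M : Type*} (G : Grpd' O M)

theorem comp_inv_cancel_right {g h : M} (hgh : G.tgt g = G.src h) :
    G.comp (G.comp g h) (G.inv h) = g := by
  rw [G.comp_assoc g h (G.inv h) hgh (G.src_inv h).symm, G.comp_inv, ← hgh, G.comp_id]

theorem inv_comp_cancel_left {g h : M} (hgh : G.tgt g = G.src h) :
    G.comp (G.inv g) (G.comp g h) = h := by
  rw [← G.comp_assoc (G.inv g) g h (G.tgt_inv g) hgh, G.inv_comp, hgh, G.id_comp]

theorem comp_inv_comp (g : M) : G.comp (G.comp g (G.inv g)) g = g := by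
  rw [G.comp_inv, G.id_comp]

theorem inv_comp_inv (g : M) : G.comp (G.comp (G.inv g) g) (G.inv g) = G.inv g := by
  rw [G.inv_comp, ← G.src_inv, G.id_comp]

theorem eq_inv_of_comp_comp_eq_self {g h : M} (hgh : G.tgt g = G.src h)
    (hhg : G.tgt h = G.src g) (hghg : G.comp (G.comp g h) g = g) : h = G.inv g := by
  have hgh_unit : G.comp g h = G.comp g (G.inv g) := by
    calc G.comp g h = G.comp (G.comp (G.comp g h) g) (G.inv g) :=
          (G.comp_inv_cancel_right (by rw [G.tgt_comp g h hgh, hhg])).symm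
      _ = G.comp g (G.inv g) := by rw [hghg]
  calc h = G.comp (G.inv g) (G.comp g h) := (G.inv_comp_cancel_left hgh).symm
    _ = G.inv g := by rw [hgh_unit, G.inv_comp_cancel_left (G.src_inv g).symm]

def partialTgt (f : O → Option M) (p : {x : O // (f x).isSome}) : O :=
  G.tgt ((f p.1).get p.2)

theorem partialTgt_of_eq_some {f : O → Option M} {p : {x : O // (f x).isSome}} {g : M}
    (hp : f p.1 = some g) : G.partialTgt f p = G.tgt g := by
  rw [partialTgt, Option.get_of_eq_some p.2 hp]

end Grpd'

namespace ALS

variable {O M : Type*} {G : Grpd' O M} [TopologicalSpace O]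

theorem ext {s t : ALS G} (h : s.f = t.f) : s = t := by
  cases s; cases t; cases h; rfl

theorem isOpenEmbedding_partialTgt (s : ALS G) : Topology.IsOpenEmbedding (G.partialTgt s.f) :=
  s.isOpenEmbedding_tgt

theorem eq_of_tgt_eq (s : ALS G) {x₁ x₂ : O} {g₁ g₂ : M} (h₁ : s.f x₁ = some g₁)
    (h₂ : s.f x₂ = some g₂) (h : G.tgt g₁ = G.tgt g₂) : x₁ = x₂ ∧ g₁ = g₂ := by
  have hp₁ : (s.f x₁).isSome := by simp [h₁]
  have hp₂ : (s.f x₂).isSome := by simp [h₂]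
  obtain rfl : x₁ = x₂ := congrArg Subtype.val <| s.isOpenEmbedding_partialTgt.injective
    (a₁ := ⟨x₁, hp₁⟩) (a₂ := ⟨x₂, hp₂⟩) <| by
      rw [G.partialTgt_of_eq_some h₁, G.partialTgt_of_eq_some h₂, h]
  exact ⟨rfl, Option.some_inj.mp (h₁.symm.trans h₂)⟩

section mul

variable {s t : ALS G} {x : O}

theorem mulFun_of_eq_none (hx : s.f x = none) : s.mulFun t x = none := by
  simp [mulFun, hx]

theorem mulFun_of_eq_some {g : M} (hx : s.f x = some g) :
    s.mulFun t x = (t.f (G.tgt g)).map (G.comp g) := by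
  simp [mulFun, hx]

theorem mulFun_eq_some {k : M} :
    s.mulFun t x = some k ↔
      ∃ g h, s.f x = some g ∧ t.f (G.tgt g) = some h ∧ G.comp g h = k := by
  simp only [mulFun, Option.bind_eq_some_iff, Option.map_eq_some_iff]
  tauto

theorem src_of_mulFun_eq_some {k : M} (hk : s.mulFun t x = some k) : G.src k = x := by
  obtain ⟨g, h, hg, hh, rfl⟩ := mulFun_eq_some.mp hk
  rw [G.src_comp g h (t.src_eq _ _ hh).symm, s.src_eq _ _ hg]

theorem exists_of_isSome_mulFun (hx : (s.mulFun t x).isSome) :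
    ∃ g h, s.f x = some g ∧ t.f (G.tgt g) = some h ∧ s.mulFun t x = some (G.comp g h) := by
  obtain ⟨k, hk⟩ := Option.isSome_iff_exists.mp hx
  obtain ⟨g, h, hg, hh, rfl⟩ := mulFun_eq_some.mp hk
  exact ⟨g, h, hg, hh, hk⟩

end mul

variable (s t : ALS G)

theorem dom_mulFun_eq :
    {x | (s.mulFun t x).isSome} =
      Subtype.val '' (G.partialTgt s.f ⁻¹' {y | (t.f y).isSome}) := by
  ext x
  rcases hx : s.f x with _ | g
  · simp [mulFun_of_eq_none hx, hx]
  · simp [mulFun_of_eq_some hx, hx, G.partialTgt_of_eq_some (p := ⟨x, by simp [hx]⟩) hx]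

theorem isOpen_dom_mulFun : IsOpen {x | (s.mulFun t x).isSome} := by
  rw [dom_mulFun_eq]
  exact s.isOpen_dom.isOpenEmbedding_subtypeVal.isOpenMap _
    (s.isOpenEmbedding_partialTgt.continuous.isOpen_preimage _ t.isOpen_dom)

theorem isOpenEmbedding_partialTgt_mulFun :
    Topology.IsOpenEmbedding (G.partialTgt (s.mulFun t)) := by
  have hfst : ∀ p : {x // (s.mulFun t x).isSome}, (s.f p.1).isSome := by
    intro p
    obtain ⟨g, -, hg, -⟩ := exists_of_isSome_mulFun p.2
    simp [hg]
  let incl : {x // (s.mulFun t x).isSome} → {x // (s.f x).isSome} := fun p => ⟨p.1, hfst p⟩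
  have hincl : Topology.IsOpenEmbedding incl := .of_comp incl
    s.isOpen_dom.isOpenEmbedding_subtypeVal (isOpen_dom_mulFun s t).isOpenEmbedding_subtypeVal
  have hsnd : ∀ p, (t.f (G.partialTgt s.f (incl p))).isSome := by
    intro p
    obtain ⟨g, h, hg, hh, -⟩ := exists_of_isSome_mulFun p.2
    rw [G.partialTgt_of_eq_some (p := incl p) hg, hh]
    rfl
  let ψ : {x // (s.mulFun t x).isSome} → {y // (t.f y).isSome} :=
    fun p => ⟨G.partialTgt s.f (incl p), hsnd p⟩
  have hψ : Topology.IsOpenEmbedding ψ :=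
    .of_comp ψ t.isOpen_dom.isOpenEmbedding_subtypeVal (s.isOpenEmbedding_partialTgt.comp hincl)
  have hfactor : G.partialTgt (s.mulFun t) = G.partialTgt t.f ∘ ψ := by
    funext p
    obtain ⟨g, h, hg, hh, hk⟩ := exists_of_isSome_mulFun p.2
    have hψh : t.f (ψ p).1 = some h := by
      rw [← hh]
      exact congrArg t.f (G.partialTgt_of_eq_some (p := incl p) hg)
    rw [Function.comp_apply, G.partialTgt_of_eq_some hk, G.partialTgt_of_eq_some hψh,
      G.tgt_comp g h (t.src_eq _ _ hh).symm]
  rw [hfactor]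
  exact t.isOpenEmbedding_partialTgt.comp hψ

instance : Mul (ALS G) where
  mul s t :=
    { f := s.mulFun t
      src_eq _ _ := src_of_mulFun_eq_some
      isOpen_dom := isOpen_dom_mulFun s t
      isOpenEmbedding_tgt := isOpenEmbedding_partialTgt_mulFun s t }

@[simp] theorem mul_f : (s * t).f = s.mulFun t := rfl

instance : Semigroup (ALS G) where
  mul_assoc s t u := ext <| funext fun x => by
    rcases hs : s.f x with _ | g
    · simp [mulFun, hs]
    rcases ht : t.f (G.tgt g) with _ | h
    · simp [mulFun, hs, ht]
    have hgh : G.tgt g = G.src h := (t.src_eq _ _ ht).symm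
    rcases hu : u.f (G.tgt h) with _ | k
    · simp [mulFun, hs, ht, hu, G.tgt_comp g h hgh]
    have hhk : G.tgt h = G.src k := (u.src_eq _ _ hu).symm
    simp [mulFun, hs, ht, hu, G.tgt_comp g h hgh, G.comp_assoc g h k hgh hhk]

open scoped Classical in
noncomputable def invFun (y : O) : Option M :=
  if h : ∃ x g, s.f x = some g ∧ G.tgt g = y then some (G.inv h.choose_spec.choose) else none

variable {s} {x y : O} {g k : M}

theorem invFun_tgt (hg : s.f x = some g) : s.invFun (G.tgt g) = some (G.inv g) := by
  have hex : ∃ x' g', s.f x' = some g' ∧ G.tgt g' = G.tgt g := ⟨x, g, hg, rfl⟩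
  obtain ⟨hchosen, htgt⟩ := hex.choose_spec.choose_spec
  rw [invFun, dif_pos hex, (s.eq_of_tgt_eq hchosen hg htgt).2]

theorem invFun_eq_some :
    s.invFun y = some k ↔ ∃ x g, s.f x = some g ∧ G.tgt g = y ∧ G.inv g = k := by
  constructor
  · intro hk
    unfold invFun at hk
    split_ifs at hk with hex
    obtain ⟨hchosen, htgt⟩ := hex.choose_spec.choose_spec
    exact ⟨_, _, hchosen, htgt, Option.some_inj.mp hk⟩
  · rintro ⟨x, g, hg, rfl, rfl⟩
    exact invFun_tgt hg

variable (s)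

theorem dom_invFun_eq : {y | (s.invFun y).isSome} = Set.range (G.partialTgt s.f) := by
  ext y
  simp only [Set.mem_ofPred_eq, Option.isSome_iff_exists, invFun_eq_some, Set.mem_range]
  constructor
  · rintro ⟨-, x, g, hg, rfl, -⟩
    exact ⟨⟨x, by simp [hg]⟩, G.partialTgt_of_eq_some hg⟩
  · rintro ⟨p, rfl⟩
    exact ⟨_, p.1, _, (Option.some_get p.2).symm, rfl, rfl⟩

theorem isOpenEmbedding_partialTgt_invFun : Topology.IsOpenEmbedding (G.partialTgt s.invFun) := by
  let φ : {x // (s.f x).isSome} ≃ₜ {y | (s.invFun y).isSome} :=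
    s.isOpenEmbedding_partialTgt.toIsEmbedding.toHomeomorph.trans
      (Homeomorph.setCongr (dom_invFun_eq s).symm)
  have hφ : ∀ p, G.partialTgt s.invFun (φ p) = p.1 := by
    intro p
    have hg : s.f p.1 = some ((s.f p.1).get p.2) := (Option.some_get p.2).symm
    rw [G.partialTgt_of_eq_some (invFun_tgt hg), G.tgt_inv, s.src_eq _ _ hg]
  have hfactor : G.partialTgt s.invFun = Subtype.val ∘ φ.symm := by
    funext q
    simpa using hφ (φ.symm q)
  rw [hfactor]
  exact s.isOpen_dom.isOpenEmbedding_subtypeVal.comp φ.symm.isOpenEmbedding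

noncomputable instance : Inv (ALS G) where
  inv s :=
    { f := s.invFun
      src_eq _ _ hk := by
        obtain ⟨x, g, -, rfl, rfl⟩ := invFun_eq_some.mp hk
        exact G.src_inv g
      isOpen_dom := by
        rw [dom_invFun_eq]
        exact s.isOpenEmbedding_partialTgt.isOpenMap.isOpen_range
      isOpenEmbedding_tgt := isOpenEmbedding_partialTgt_invFun s }

theorem inv_f : s⁻¹.f = s.invFun := rfl

theorem mul_inv_mul_self : s * s⁻¹ * s = s := ext <| funext fun x => by
  rcases hs : s.f x with _ | g
  · simp [mulFun, hs]
  have hss : (s * s⁻¹).f x = some (G.comp g (G.inv g)) := by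
    rw [mul_f, mulFun_of_eq_some hs, inv_f, invFun_tgt hs, Option.map_some]
  have htgt : G.tgt (G.comp g (G.inv g)) = x := by rw [G.comp_inv, G.tgt_e, s.src_eq _ _ hs]
  rw [mul_f, mulFun_of_eq_some hss, htgt, hs, Option.map_some, G.comp_inv_comp]

theorem inv_mul_inv_self : s⁻¹ * s * s⁻¹ = s⁻¹ := ext <| funext fun y => by
  rcases hy : s.invFun y with _ | k
  · simp [mulFun, inv_f, hy]
  obtain ⟨x, g, hg, rfl, rfl⟩ := invFun_eq_some.mp hy
  have hss : (s⁻¹ * s).f (G.tgt g) = some (G.comp (G.inv g) g) := by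
    rw [mul_f, mulFun_of_eq_some hy, G.tgt_inv, s.src_eq _ _ hg, hg, Option.map_some]
  have htgt : G.tgt (G.comp (G.inv g) g) = G.tgt g := by rw [G.inv_comp, G.tgt_e]
  rw [mul_f, mulFun_of_eq_some hss, htgt, inv_f, hy, Option.map_some, G.inv_comp_inv]

variable {s} {t : ALS G}

theorem apply_tgt_eq_inv_of_mul_mul (hst : s * t * s = s) (hg : s.f x = some g) :
    t.f (G.tgt g) = some (G.inv g) := by
  have hsts : (s * t * s).f x = some g := by rw [hst, hg]
  obtain ⟨k, g₂, hk, hg₂, hkg₂⟩ := mulFun_eq_some.mp hsts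
  obtain ⟨g₁, h, hg₁, hh, rfl⟩ := mulFun_eq_some.mp hk
  obtain rfl : g = g₁ := Option.some_inj.mp (hg.symm.trans hg₁)
  have hgh : G.tgt g = G.src h := (t.src_eq _ _ hh).symm
  rw [G.tgt_comp g h hgh] at hg₂
  have hhg₂ : G.tgt h = G.src g₂ := (s.src_eq _ _ hg₂).symm
  have htgt : G.tgt g₂ = G.tgt g := by
    rw [← hkg₂, G.tgt_comp _ _ (by rw [G.tgt_comp g h hgh, hhg₂])]
  obtain ⟨hx, rfl⟩ := s.eq_of_tgt_eq hg₂ hg htgt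
  rw [hh, G.eq_inv_of_comp_comp_eq_self hgh (by rw [hx, s.src_eq _ _ hg]) hkg₂]

theorem eq_inv_of_mul_mul (hst : s * t * s = s) (hts : t * s * t = t) : t = s⁻¹ := by
  refine ext <| funext fun y => Option.ext fun k => ?_
  rw [inv_f, invFun_eq_some]
  constructor
  · intro hk
    have htst : (t * s * t).f y = some k := by rw [hts, hk]
    obtain ⟨k₁, -, hk₁, -, -⟩ := mulFun_eq_some.mp htst
    obtain ⟨k', g, hk', hg, -⟩ := mulFun_eq_some.mp hk₁
    obtain rfl : k' = k := Option.some_inj.mp (hk'.symm.trans hk)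
    have hinv := apply_tgt_eq_inv_of_mul_mul hst hg
    have htgt : G.tgt k' = G.tgt (G.inv g) := by rw [G.tgt_inv, s.src_eq _ _ hg]
    obtain ⟨rfl, rfl⟩ := t.eq_of_tgt_eq hk' hinv htgt
    exact ⟨_, g, hg, rfl, rfl⟩
  · rintro ⟨x, g, hg, rfl, rfl⟩
    exact apply_tgt_eq_inv_of_mul_mul hst hg

end ALS

/-- The set `Γ(G)` of admissible local sections of a groupoid `G` with
topologized object space is an inverse semigroup under the product
`(st)(x) = s(x) ∘ t(βs(x))`, the (unique) generalized inverse of `s` being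
`βs(x) ↦ (s(x))⁻¹`. -/
theorem admissible_local_sections_inverse_semigroup
    {O M : Type*} (G : Grpd' O M) [TopologicalSpace O] :
    ∃ m : ALS G → ALS G → ALS G,
      -- the product is given by (st)(x) = s(x) ∘ t(βs(x))
      (∀ s t : ALS G, (m s t).f = s.mulFun t) ∧
      -- the product is associative
      (∀ s t u : ALS G, m (m s t) u = m s (m t u)) ∧
      -- every element has a unique generalized inverse ...
      (∀ s : ALS G, ∃! t : ALS G, m (m s t) s = s ∧ m (m t s) t = t) ∧
      -- ... given by βs(x) ↦ (s(x))⁻¹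
      (∀ s : ALS G, ∃ t : ALS G, (m (m s t) s = s ∧ m (m t s) t = t) ∧
        ∀ x g, s.f x = some g → t.f (G.tgt g) = some (G.inv g)) :=
  ⟨(· * ·), ALS.mul_f, mul_assoc,
    fun s => ⟨s⁻¹, ⟨s.mul_inv_mul_self, s.inv_mul_inv_self⟩,
      fun _ ht => ALS.eq_inv_of_mul_mul ht.1 ht.2⟩,
    fun s => ⟨s⁻¹, ⟨s.mul_inv_mul_self, s.inv_mul_inv_self⟩, fun _ _ => ALS.invFun_tgt⟩⟩
end

section
/- Let G and H be group-groupoids, W ⊆ G a wide subgroupoid that is also a subgroup of the morphism group and generates G as a groupoid, and f: W → H a local morphism of group-groupoids which is the identity on objects. If f̃: G → H is a groupoid morphism extending f, then f̃ also preserves the group product: f̃(ab) = f̃(a)f̃(b) for all morphisms a, b of G. -/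
/-- `IsComposite G W g` says that the morphism `g` is a finite composite of
morphisms belonging to `W`; `W` generates `G` when every morphism satisfies
this. -/
inductive IsComposite {O M : Type*} (G : Grpd' O M) (W : Set M) : M → Prop
  | base {w : M} : w ∈ W → IsComposite G W w
  | comp {g h : M} : IsComposite G W g → IsComposite G W h →
      G.tgt g = G.src h → IsComposite G W (G.comp g h)

structure IsIdOnObjFunctor {O M M' : Type*} (G : Grpd' O M) (H : Grpd' O M') (F : M → M') :
    Prop where
  map_src : ∀ g, H.src (F g) = G.src g
  map_tgt : ∀ g, H.tgt (F g) = G.tgt g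
  map_e : ∀ x, F (G.e x) = H.e x
  map_comp : ∀ g h, G.tgt g = G.src h → F (G.comp g h) = H.comp (F g) (F h)

namespace GrpGrpd

variable {O M : Type*} [Group O] [Group M] (G : GrpGrpd O M)

theorem tgt_mul_eq_src_mul {g h k l : M} (hgk : G.tgt g = G.src k) (hhl : G.tgt h = G.src l) :
    G.tgt (g * h) = G.src (k * l) := by
  rw [G.tgt_mul, G.src_mul, hgk, hhl]

theorem comp_mul {g h : M} (hgh : G.tgt g = G.src h) (b : M) :
    G.comp g h * b = G.comp (g * b) (h * G.e (G.tgt b)) := by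
  rw [G.interchange g b h _ hgh (G.src_e _).symm, G.comp_id]

theorem mul_comp (a : M) {g h : M} (hgh : G.tgt g = G.src h) :
    a * G.comp g h = G.comp (a * g) (G.e (G.tgt a) * h) := by
  rw [G.interchange a g _ h (G.src_e _).symm hgh, G.comp_id]

end GrpGrpd

namespace IsIdOnObjFunctor

variable {O M M' : Type*} [Group O] [Group M] [Group M'] {G : GrpGrpd O M} {H : GrpGrpd O M'}
  {F : M → M'}

theorem tgt_eq_src (hF : IsIdOnObjFunctor G.toGrpd' H.toGrpd' F) {g h : M}
    (hgh : G.tgt g = G.src h) : H.tgt (F g) = H.src (F h) := by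
  rw [hF.map_tgt, hF.map_src, hgh]

theorem map_comp_mul (hF : IsIdOnObjFunctor G.toGrpd' H.toGrpd' F) {g h : M}
    (hgh : G.tgt g = G.src h) (b : M)
    (hg : F (g * b) = F g * F b) (hh : F (h * G.e (G.tgt b)) = F h * F (G.e (G.tgt b))) :
    F (G.comp g h * b) = F (G.comp g h) * F b := by
  rw [G.comp_mul hgh, hF.map_comp _ _ (G.tgt_mul_eq_src_mul hgh (G.src_e _).symm), hg, hh,
    hF.map_e, ← hF.map_tgt b, ← H.comp_mul (hF.tgt_eq_src hgh), hF.map_comp g h hgh]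

theorem map_mul_comp (hF : IsIdOnObjFunctor G.toGrpd' H.toGrpd' F) (a : M) {g h : M}
    (hgh : G.tgt g = G.src h)
    (hg : F (a * g) = F a * F g) (hh : F (G.e (G.tgt a) * h) = F (G.e (G.tgt a)) * F h) :
    F (a * G.comp g h) = F a * F (G.comp g h) := by
  rw [G.mul_comp a hgh, hF.map_comp _ _ (G.tgt_mul_eq_src_mul (G.src_e _).symm hgh), hg, hh,
    hF.map_e, ← hF.map_tgt a, ← H.mul_comp _ (hF.tgt_eq_src hgh), hF.map_comp g h hgh]

theorem map_mul_of_isComposite (hF : IsIdOnObjFunctor G.toGrpd' H.toGrpd' F)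
    {W : Set M} (hWide : ∀ x, G.e x ∈ W)
    (hW : ∀ u ∈ W, ∀ v ∈ W, F (u * v) = F u * F v) {a b : M}
    (ha : IsComposite G.toGrpd' W a) (hb : IsComposite G.toGrpd' W b) :
    F (a * b) = F a * F b := by
  have left : ∀ u ∈ W, ∀ {b}, IsComposite G.toGrpd' W b → F (u * b) = F u * F b := by
    intro u hu b hb
    induction hb generalizing u with
    | base hv => exact hW u hu _ hv
    | comp _ _ hgh ihg ihh => exact hF.map_mul_comp u hgh (ihg u hu) (ihh _ (hWide _))
  induction ha generalizing b with
  | base hu => exact left _ hu hb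
  | comp _ _ hgh ihg ihh => exact hF.map_comp_mul hgh b (ihg hb) (ihh (.base (hWide _)))

end IsIdOnObjFunctor

theorem local_morphism_extension_preserves_mul_general
    {O M M' : Type*} [Group O] [Group M] [Group M']
    (G : GrpGrpd O M) (H : GrpGrpd O M') (W : Set M)
    -- W is a wide subgroupoid of G
    (hWide : ∀ x : O, G.e x ∈ W)
    -- W is a subgroup of the morphism group of G
    (hWmul : ∀ u v, u ∈ W → v ∈ W → u * v ∈ W)
    -- W generates G as a groupoid
    (hgen : ∀ g : M, IsComposite G.toGrpd' W g)
    -- f is a local morphism of group-groupoids, the identity on objects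
    (f : M → M')
    (hfmul : ∀ u v, u ∈ W → v ∈ W → f (u * v) = f u * f v)
    -- F is a groupoid morphism (identity on objects) extending f
    (F : M → M')
    (hFext : ∀ u ∈ W, F u = f u)
    (hFsrc : ∀ g : M, H.src (F g) = G.src g)
    (hFtgt : ∀ g : M, H.tgt (F g) = G.tgt g)
    (hFe : ∀ x : O, F (G.e x) = H.e x)
    (hFcomp : ∀ g h : M, G.tgt g = G.src h →
      F (G.comp g h) = H.comp (F g) (F h)) :
    ∀ a b : M, F (a * b) = F a * F b := by
  intro a b
  have hF : IsIdOnObjFunctor G.toGrpd' H.toGrpd' F := ⟨hFsrc, hFtgt, hFe, hFcomp⟩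
  refine hF.map_mul_of_isComposite hWide (fun u hu v hv => ?_) (hgen a) (hgen b)
  rw [hFext _ (hWmul u v hu hv), hFext u hu, hFext v hv, hfmul u v hu hv]

/-- Let `G`, `H` be group-groupoids, `W ⊆ G` a wide subgroupoid which is
also a subgroup of the morphism group and which generates `G`, and
`f : W → H` a local morphism of group-groupoids which is the identity on
objects.  If `F : G → H` is a groupoid morphism extending `f`, then `F`
also preserves the group product. -/
theorem local_morphism_extension_preserves_mul
    {O M M' : Type*} [Group O] [Group M] [Group M']
    (G : GrpGrpd O M) (H : GrpGrpd O M') (W : Set M)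
    -- W is a wide subgroupoid of G
    (hWide : ∀ x : O, G.e x ∈ W)
    (hWcomp : ∀ u v, u ∈ W → v ∈ W → G.tgt u = G.src v → G.comp u v ∈ W)
    (hWginv : ∀ u ∈ W, G.inv u ∈ W)
    -- W is a subgroup of the morphism group of G
    (hW1 : (1 : M) ∈ W)
    (hWmul : ∀ u v, u ∈ W → v ∈ W → u * v ∈ W)
    (hWinv : ∀ u ∈ W, u⁻¹ ∈ W)
    -- W generates G as a groupoid
    (hgen : ∀ g : M, IsComposite G.toGrpd' W g)
    -- f is a local morphism of group-groupoids, the identity on objects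
    (f : M → M')
    (hfsrc : ∀ u ∈ W, H.src (f u) = G.src u)
    (hftgt : ∀ u ∈ W, H.tgt (f u) = G.tgt u)
    (hfe : ∀ x : O, f (G.e x) = H.e x)
    (hfcomp : ∀ u v, u ∈ W → v ∈ W → G.tgt u = G.src v →
      f (G.comp u v) = H.comp (f u) (f v))
    (hfmul : ∀ u v, u ∈ W → v ∈ W → f (u * v) = f u * f v)
    -- F is a groupoid morphism (identity on objects) extending f
    (F : M → M')
    (hFext : ∀ u ∈ W, F u = f u)
    (hFsrc : ∀ g : M, H.src (F g) = G.src g)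
    (hFtgt : ∀ g : M, H.tgt (F g) = G.tgt g)
    (hFe : ∀ x : O, F (G.e x) = H.e x)
    (hFcomp : ∀ g h : M, G.tgt g = G.src h →
      F (G.comp g h) = H.comp (F g) (F h)) :
    ∀ a b : M, F (a * b) = F a * F b :=
  local_morphism_extension_preserves_mul_general G H W hWide hWmul hgen f hfmul F hFext hFsrc hFtgt
    hFe hFcomp
end

section
/- Let G be a group-groupoid and a = u₁∘u₂∘…∘u_n, b = v₁∘v₂∘…∘v_m composable strings of morphisms with m ≥ n. Then the group product satisfies ab = (u₁v₁)∘…∘(u_nv_n)∘(1_{β(u_n)}v_{n+1})∘…∘(1_{β(u_n)}v_m), where 1_{β(u_n)} is the identity morphism at the object β(u_n). -/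
/-- The iterated groupoid composite `u₁ ∘ u₂ ∘ … ∘ uₙ` of a list of
morphisms (the empty composite is the group unit, a junk value). -/
def listComp {O M : Type*} [Group M] (G : Grpd' O M) : List M → M
  | [] => 1
  | a :: t => t.foldl G.comp a

/-!
Both sides are computed by folding composition along the lists. The interchange law
`(a c) ∘ (b d) = (a ∘ b) (c ∘ d)` lets the product of two composites of equal length be
folded pairwise, which gives `ab` when `u` and `v` have the same length. In general, pad `u`
with identities at its final target `β(uₙ)`: this changes neither `a` nor composability.
-/

namespace Grpd'

variable {O M : Type*} (G : Grpd' O M)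

theorem isChain_comp_cons {a b : M} {t : List M} (hab : G.tgt a = G.src b)
    (h : List.IsChain (fun g h => G.tgt g = G.src h) (b :: t)) :
    List.IsChain (fun g h => G.tgt g = G.src h) (G.comp a b :: t) :=
  h.imp_head (R := fun g h => G.tgt g = G.src h) fun hb => (G.tgt_comp a b hab).trans hb

theorem tgt_foldl_comp :
    ∀ (a : M) (t : List M), List.IsChain (fun g h => G.tgt g = G.src h) (a :: t) →
      G.tgt (t.foldl G.comp a) = G.tgt ((a :: t).getLast (List.cons_ne_nil a t))
  | _, [], _ => rfl
  | a, b :: t, h => by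
    obtain ⟨hab, h⟩ := List.isChain_cons_cons.mp h
    rw [List.foldl_cons, tgt_foldl_comp _ t (G.isChain_comp_cons hab h)]
    cases t <;> simp [G.tgt_comp a b hab]

theorem foldl_comp_replicate_e {c : M} {x : O} (hc : G.tgt c = x) (k : ℕ) :
    (List.replicate k (G.e x)).foldl G.comp c = c := by
  induction k with
  | zero => rfl
  | succ k ih => rw [List.replicate_succ', List.foldl_concat, ih, ← hc, G.comp_id]

theorem listComp_append_replicate_e [Group M] {l : List M} (hl : l ≠ [])
    (h : List.IsChain (fun g h => G.tgt g = G.src h) l) (k : ℕ) :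
    listComp G (l ++ List.replicate k (G.e (G.tgt (l.getLast hl)))) = listComp G l := by
  obtain ⟨a, t, rfl⟩ := List.exists_cons_of_ne_nil hl
  rw [List.cons_append, listComp, listComp, List.foldl_append,
    G.foldl_comp_replicate_e (G.tgt_foldl_comp a t h)]

theorem isChain_append_replicate_e {l : List M} (hl : l ≠ [])
    (h : List.IsChain (fun g h => G.tgt g = G.src h) l) (k : ℕ) :
    List.IsChain (fun g h => G.tgt g = G.src h)
      (l ++ List.replicate k (G.e (G.tgt (l.getLast hl)))) := by
  refine h.append (List.isChain_replicate_of_rel k (by rw [G.tgt_e, G.src_e])) ?_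
  intro g hg y hy
  rw [List.getLast?_eq_some_getLast hl, Option.mem_some_iff] at hg
  rw [List.eq_of_mem_replicate (List.mem_of_mem_head? hy), G.src_e, hg]

end Grpd'

namespace GrpGrpd

variable {O M : Type*} [Group O] [Group M] (G : GrpGrpd O M)

theorem foldl_comp_mul_foldl_comp :
    ∀ (a c : M) (t s : List M), t.length = s.length →
      List.IsChain (fun g h => G.tgt g = G.src h) (a :: t) →
      List.IsChain (fun g h => G.tgt g = G.src h) (c :: s) →
      t.foldl G.comp a * s.foldl G.comp c = (List.zipWith (· * ·) t s).foldl G.comp (a * c)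
  | _, _, [], [], _, _, _ => rfl
  | a, c, b :: t, d :: s, hlen, hbt, hds => by
    obtain ⟨hab, hbt⟩ := List.isChain_cons_cons.mp hbt
    obtain ⟨hcd, hds⟩ := List.isChain_cons_cons.mp hds
    rw [List.foldl_cons, List.foldl_cons, List.zipWith_cons_cons, List.foldl_cons,
      G.interchange a c b d hab hcd]
    exact foldl_comp_mul_foldl_comp _ _ t s (by simpa using hlen)
      (G.isChain_comp_cons hab hbt) (G.isChain_comp_cons hcd hds)

theorem listComp_mul_listComp {u v : List M} (hlen : u.length = v.length)
    (hu : List.IsChain (fun g h => G.tgt g = G.src h) u)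
    (hv : List.IsChain (fun g h => G.tgt g = G.src h) v) :
    listComp G.toGrpd' u * listComp G.toGrpd' v =
      listComp G.toGrpd' (List.zipWith (· * ·) u v) := by
  match u, v, hlen with
  | [], [], _ => exact mul_one 1
  | a :: t, c :: s, hlen =>
    exact G.foldl_comp_mul_foldl_comp a c t s (by simpa using hlen) hu hv

end GrpGrpd

theorem group_groupoid_product_of_composites_general
    {O M : Type*} [Group O] [Group M] (G : GrpGrpd O M)
    (u v : List M) (hu : u ≠ [])
    (huc : List.Chain' (fun g h => G.tgt g = G.src h) u)
    (hvc : List.Chain' (fun g h => G.tgt g = G.src h) v)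
    (hmn : u.length ≤ v.length) :
    listComp G.toGrpd' u * listComp G.toGrpd' v =
      listComp G.toGrpd'
        (List.zipWith (· * ·)
          (u ++ List.replicate (v.length - u.length)
            (G.e (G.tgt (u.getLast hu)))) v) := by
  have hlen : (u ++ List.replicate (v.length - u.length)
      (G.e (G.tgt (u.getLast hu)))).length = v.length := by
    simp only [List.length_append, List.length_replicate]
    omega
  rw [← G.listComp_append_replicate_e hu huc (v.length - u.length),
    G.listComp_mul_listComp hlen (G.isChain_append_replicate_e hu huc _) hvc]

/-- In a group-groupoid, if `a = u₁∘…∘uₙ` and `b = v₁∘…∘v_m` are composable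
strings of morphisms with `m ≥ n`, then
`ab = (u₁v₁)∘…∘(uₙvₙ)∘(1_{β(uₙ)}v_{n+1})∘…∘(1_{β(uₙ)}v_m)`, where
`1_{β(uₙ)}` is the identity morphism at the object `β(uₙ)`. -/
theorem group_groupoid_product_of_composites
    {O M : Type*} [Group O] [Group M] (G : GrpGrpd O M)
    (u v : List M) (hu : u ≠ []) (hv : v ≠ [])
    (huc : List.Chain' (fun g h => G.tgt g = G.src h) u)
    (hvc : List.Chain' (fun g h => G.tgt g = G.src h) v)
    (hmn : u.length ≤ v.length) :
    listComp G.toGrpd' u * listComp G.toGrpd' v =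
      listComp G.toGrpd'
        (List.zipWith (· * ·)
          (u ++ List.replicate (v.length - u.length)
            (G.e (G.tgt (u.getLast hu)))) v) :=
  group_groupoid_product_of_composites_general G u v hu huc hvc hmn
end

section
/- Let G be a star topological groupoid and g a morphism of G from x to y. Then left translation L_g induces a group isomorphism and (after applying the fundamental groupoid functor) a groupoid isomorphism π(G_y) → π(G_x); in particular if a: [0,1] → G_x is a path in the star G_x and b: [0,1] → G_{β(a(1))} is a path starting at the identity ε(β(a(1))), then t ↦ a(1)∘b(t) is a path in G_x from a(1) to a(1)∘b(1), and the formula [a]•[b] = [a ⋆ (a(1)∘b)] gives a well-defined operation on homotopy classes rel endpoints. -/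
/-- The star of a groupoid `G` at the object `x`. -/
abbrev Grpd'.star {O M : Type*} (G : Grpd' O M) (x : O) := {m : M // G.src m = x}

/-- Left translation `L_g : G_{β(g)} → G_{α(g)}`, `h ↦ g ∘ h`. -/
def Grpd'.starTrans {O M : Type*} (G : Grpd' O M) (g : M)
    (h : G.star (G.tgt g)) : G.star (G.src g) :=
  ⟨G.comp g h.1, by rw [G.src_comp g h.1 h.2.symm]⟩

/-!
Left translations are homeomorphisms of stars, so they induce equivalences of fundamental
groupoids and isomorphisms of fundamental groups. Translation by `q = a(1)` is a continuous map
`G_{β(q)} → G_x` sending `ε(β(q))` to `q`, so `t ↦ q ∘ b(t)` is the image of `b` under it, and a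
homotopy of `b` is carried along to a homotopy of this path.
-/

namespace Homeomorph

variable {X Y : Type*} [TopologicalSpace X] [TopologicalSpace Y]

noncomputable def fundamentalGroupoidEquivalence (h : X ≃ₜ Y) :
    FundamentalGroupoid X ≌ FundamentalGroupoid Y :=
  FundamentalGroupoidFunctor.equivOfHomotopyEquiv h.toHomotopyEquiv

noncomputable def fundamentalGroupMulEquiv (h : X ≃ₜ Y) (x : X) :
    FundamentalGroup X x ≃* FundamentalGroup Y (h x) :=
  h.fundamentalGroupoidEquivalence.fullyFaithfulFunctor.mulEquivEnd _

end Homeomorph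

theorem Path.Homotopic.of_forall_eq_map {X Y : Type*} [TopologicalSpace X] [TopologicalSpace Y]
    (f : C(X, Y)) {x y : X} {x' y' : Y} {b b' : Path x y} {c c' : Path x' y'}
    (hb : b.Homotopic b') (hc : ∀ t, c t = f (b t)) (hc' : ∀ t, c' t = f (b' t)) :
    c.Homotopic c' := by
  obtain rfl : x' = f x := by simpa using hc 0
  obtain rfl : y' = f y := by simpa using hc 1
  obtain rfl : c = b.map f.continuous := Path.ext (funext hc)
  obtain rfl : c' = b'.map f.continuous := Path.ext (funext hc')
  exact hb.map f

namespace Grpd'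

variable {O M : Type*} (G : Grpd' O M) {x : O}

/-- Left translation `L_q` with its codomain read as the star `G_x` containing `q`. -/
def starTransAt (q : G.star x) (h : G.star (G.tgt q.1)) : G.star x :=
  ⟨G.comp q.1 h.1, by rw [G.src_comp q.1 h.1 h.2.symm]; exact q.2⟩

theorem starTransAt_of_eq_e (q : G.star x) {i : G.star (G.tgt q.1)}
    (hi : i.1 = G.e (G.tgt q.1)) : G.starTransAt q i = q :=
  Subtype.ext (by simp only [starTransAt, hi, G.comp_id])

theorem continuous_starTransAt [∀ x : O, TopologicalSpace (G.star x)]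
    (hL : ∀ g : M, Continuous (G.starTrans g)) (q : G.star x) :
    Continuous (G.starTransAt q) := by
  obtain ⟨q, rfl⟩ := q
  exact hL q

end Grpd'

/-- Let `G` be a star topological groupoid (each star is topologized and all
left translations are homeomorphisms).  Then each left translation `L_g`
induces a group isomorphism of fundamental groups and an equivalence
(isomorphism) of fundamental groupoids `π(G_{β(g)}) → π(G_{α(g)})`; moreover,
if `a` is a path in the star `G_x` and `b` is a path in `G_{β(a(1))}`
starting at the identity `ε(β(a(1)))`, then `t ↦ a(1) ∘ b(t)` is a path in
`G_x` from `a(1)` to `a(1) ∘ b(1)`, and the formula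
`[a] • [b] = [a ⋆ (a(1) ∘ b)]` is well defined on homotopy classes rel
endpoints. -/
theorem star_translation_induces_monodromy_composition
    {O M : Type*} (G : Grpd' O M)
    [∀ x : O, TopologicalSpace {m : M // G.src m = x}]
    (hL : ∀ g : M, IsHomeomorph (G.starTrans g))
    (x : O) (p q : G.star x) (a : Path p q)
    (i r : G.star (G.tgt q.1)) (hi : i.1 = G.e (G.tgt q.1))
    (b : Path i r) :
    -- L_g induces an isomorphism of fundamental groups
    (∀ (g : M) (h₀ : G.star (G.tgt g)),
      Nonempty (FundamentalGroup (G.star (G.tgt g)) h₀ ≃*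
        FundamentalGroup (G.star (G.src g)) (G.starTrans g h₀))) ∧
    -- and an isomorphism of fundamental groupoids π(G_{β g}) → π(G_{α g})
    (∀ g : M,
      Nonempty (CategoryTheory.Equivalence
        (FundamentalGroupoid (G.star (G.tgt g)))
        (FundamentalGroupoid (G.star (G.src g))))) ∧
    -- t ↦ a(1) ∘ b(t) is a path in G_x from a(1) to a(1) ∘ b(1)
    (∃ c : Path q (⟨G.comp q.1 r.1, by
        rw [G.src_comp q.1 r.1 r.2.symm]; exact q.2⟩ : G.star x),
      ∀ t, (c t).1 = G.comp q.1 (b t).1) ∧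
    -- the formula [a] • [b] = [a ⋆ (a(1) ∘ b)] is well defined
    (∀ (a' : Path p q) (b' : Path i r), a.Homotopic a' → b.Homotopic b' →
      ∀ (c c' : Path q (⟨G.comp q.1 r.1, by
          rw [G.src_comp q.1 r.1 r.2.symm]; exact q.2⟩ : G.star x)),
        (∀ t, (c t).1 = G.comp q.1 (b t).1) →
        (∀ t, (c' t).1 = G.comp q.1 (b' t).1) →
        (a.trans c).Homotopic (a'.trans c')) := by
  have hφ := G.continuous_starTransAt (fun g => (hL g).continuous) q
  refine ⟨fun g h₀ => ⟨((hL g).homeomorph _).fundamentalGroupMulEquiv h₀⟩,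
    fun g => ⟨((hL g).homeomorph _).fundamentalGroupoidEquivalence⟩,
    ⟨(b.map hφ).cast (G.starTransAt_of_eq_e q hi).symm rfl, fun _ => rfl⟩, ?_⟩
  intro a' b' ha hb c c' hc hc'
  exact ha.hcomp <| hb.of_forall_eq_map ⟨_, hφ⟩
    (fun t => Subtype.ext (hc t)) (fun t => Subtype.ext (hc' t))
end

section
/- Let G be a star topological groupoid such that each star G_x has a universal cover, and let Mon(G) be the monodromy groupoid, the disjoint union over x ∈ Ob(G) of the stars π(G_x)_{ε(x)} of the fundamental groupoids of the stars, with composition [a]•[b] = [a ⋆ (a(1)∘b)]. Then the map p: Mon(G) → G sending [a] to the endpoint a(1) is a morphism of groupoids which is the identity on objects. -/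
attribute [local instance] Path.Homotopic.setoid

/-- The identity `ε(x)`, viewed as a point of the star `G_x`. -/
def Grpd'.idm {O M : Type*} (G : Grpd' O M) (x : O) : G.star x :=
  ⟨G.e x, G.src_e x⟩

/-- The underlying set of the monodromy groupoid `Mon(G)` of a star
topological groupoid `G`: the disjoint union over the objects `x` of the
stars `π(G_x)_{ε(x)}`, i.e. homotopy classes rel endpoints of paths in
`G_x` starting at `ε(x)`. -/
abbrev MonM {O M : Type*} (G : Grpd' O M)
    [∀ x : O, TopologicalSpace {m : M // G.src m = x}] :=
  Σ (x : O) (z : G.star x), Path.Homotopic.Quotient (G.idm x) z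

/-- The projection `p : Mon(G) → G` sending the class `[a]` to the endpoint
`a(1)`. -/
def monProj {O M : Type*} (G : Grpd' O M)
    [∀ x : O, TopologicalSpace {m : M // G.src m = x}] (m : MonM G) : M :=
  m.2.1.1

/-!
The composite `[a] • [b]` is represented by `a` followed by the left translate of `b` by
`a(1)`, so its endpoint is `a(1) ∘ b(1)`: the projection `p` is multiplicative by
construction. The groupoid laws of `Mon(G)` reduce to those of the fundamental groupoids of
the stars, because left translation by `a(1)` is continuous, carries `ε` to `a(1)`, and
translating by `h` and then by `g` is translating by `g ∘ h`. The inverse of `[a]` is the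
translate of the reversed path `a⁻¹` by `a(1)⁻¹`.
-/

theorem Path.apply_trans_congr {X Y Z : Type*} [TopologicalSpace X] [TopologicalSpace Y]
    (f : X → Z) (g : Y → Z) {x₀ x₁ x₂ : X} {y₀ y₁ y₂ : Y}
    {a : Path x₀ x₁} {b : Path x₁ x₂} {a' : Path y₀ y₁} {b' : Path y₁ y₂}
    (ha : ∀ t, f (a t) = g (a' t)) (hb : ∀ t, f (b t) = g (b' t)) (t : unitInterval) :
    f (a.trans b t) = g (a'.trans b' t) := by
  rw [Path.trans_apply, Path.trans_apply]
  split_ifs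
  exacts [ha _, hb _]

namespace MonM

variable {O M : Type*} {G : Grpd' O M} [∀ x : O, TopologicalSpace {m : M // G.src m = x}]

theorem mk_eq_mk_of_val {x : O} {p p' : G.star x} {P : Path (G.idm x) p}
    {P' : Path (G.idm x) p'} (h : ∀ t, (P t).1 = (P' t).1) :
    (⟨x, p, ⟦P⟧⟩ : MonM G) = ⟨x, p', ⟦P'⟧⟩ := by
  have hp : p = p' := Subtype.ext (by simpa using h 1)
  subst hp
  rw [Path.Homotopic.hpath_hext (fun t => Subtype.ext (h t)) |>.eq]

theorem mk_eq_mk_of_homotopic {x : O} {p : G.star x} {P P' : Path (G.idm x) p}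
    (h : P.Homotopic P') : (⟨x, p, ⟦P⟧⟩ : MonM G) = ⟨x, p, ⟦P'⟧⟩ := by
  rw [Quotient.sound h]

end MonM

namespace Grpd'

variable {O M : Type*} (G : Grpd' O M)

theorem e_comp_of_src_eq {x : O} {g : M} (hg : G.src g = x) : G.comp (G.e x) g = g := by
  rw [← hg]; exact G.id_comp g

theorem comp_e_of_tgt_eq {y : O} {g : M} (hg : G.tgt g = y) : G.comp g (G.e y) = g := by
  rw [← hg]; exact G.comp_id g

theorem comp_inv_comp_cancel {x : O} {g h : M} (hg : G.src g = x) (hh : G.src h = x) :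
    G.comp g (G.comp (G.inv g) h) = h := by
  rw [← G.comp_assoc g (G.inv g) h (G.src_inv g).symm ((G.tgt_inv g).trans (hg.trans hh.symm)),
    G.comp_inv g, hg]
  exact G.e_comp_of_src_eq hh

variable [∀ x : O, TopologicalSpace {m : M // G.src m = x}]

/-- `G` is star topological: left translations are continuous, hence homeomorphisms. -/
def ContinuousLeftTranslations : Prop :=
  ∀ (g : M) (x : O) (hg : G.src g = x),
    Continuous (fun h : G.star (G.tgt g) =>
      (⟨G.comp g h.1, by rw [G.src_comp g h.1 h.2.symm, hg]⟩ : G.star x))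

variable {G} (hL : G.ContinuousLeftTranslations)

def leftTransl (g : M) {x y : O} (hs : G.src g = x) (ht : G.tgt g = y) :
    C(G.star y, G.star x) where
  toFun p := ⟨G.comp g p.1, by rw [G.src_comp g p.1 (ht.trans p.2.symm), hs]⟩
  continuous_toFun := by subst ht; exact hL g x hs

theorem leftTransl_idm {x y : O} (z : G.star x) (h : G.tgt z.1 = y) :
    G.leftTransl hL z.1 z.2 h (G.idm y) = z :=
  Subtype.ext (G.comp_e_of_tgt_eq h)

theorem leftTransl_inv_self {x : O} (z : G.star x) :
    G.leftTransl hL (G.inv z.1) (G.src_inv z.1) ((G.tgt_inv z.1).trans z.2) z =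
      G.idm (G.tgt z.1) :=
  Subtype.ext (G.inv_comp z.1)

theorem leftTransl_inv_idm {x : O} (z : G.star x) :
    G.leftTransl hL (G.inv z.1) (G.src_inv z.1) ((G.tgt_inv z.1).trans z.2) (G.idm x) =
      ⟨G.inv z.1, G.src_inv z.1⟩ :=
  Subtype.ext (G.comp_e_of_tgt_eq ((G.tgt_inv z.1).trans z.2))

open Classical in
/-- `[a] • [b] = [a ⋆ (a(1) ∘ b)]`; on a non-composable pair it returns the first argument. -/
noncomputable def monComp (m n : MonM G) : MonM G :=
  if h : G.tgt m.2.1.1 = n.1 then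
    ⟨m.1, G.leftTransl hL m.2.1.1 m.2.1.2 h n.2.1,
      m.2.2.trans ((n.2.2.map (G.leftTransl hL m.2.1.1 m.2.1.2 h)).cast
        (G.leftTransl_idm hL m.2.1 h).symm rfl)⟩
  else m

def monInv (m : MonM G) : MonM G :=
  ⟨G.tgt m.2.1.1, ⟨G.inv m.2.1.1, G.src_inv m.2.1.1⟩,
    (m.2.2.symm.map (G.leftTransl hL (G.inv m.2.1.1) (G.src_inv m.2.1.1)
      ((G.tgt_inv m.2.1.1).trans m.2.1.2))).cast
      (G.leftTransl_inv_self hL m.2.1).symm (G.leftTransl_inv_idm hL m.2.1).symm⟩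

def monId (x : O) : MonM G :=
  ⟨x, G.idm x, ⟦Path.refl (G.idm x)⟧⟩

theorem monComp_mk {x y : O} (z : G.star x) (r : G.star y) (a : Path (G.idm x) z)
    (b : Path (G.idm y) r) (h : G.tgt z.1 = y) :
    G.monComp hL ⟨x, z, ⟦a⟧⟩ ⟨y, r, ⟦b⟧⟩ =
      ⟨x, G.leftTransl hL z.1 z.2 h r,
        ⟦a.trans ((b.map (G.leftTransl hL z.1 z.2 h).continuous).cast
          (G.leftTransl_idm hL z h).symm rfl)⟧⟩ :=
  dif_pos h

theorem monInv_mk {x : O} (z : G.star x) (a : Path (G.idm x) z) :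
    G.monInv hL ⟨x, z, ⟦a⟧⟩ =
      ⟨G.tgt z.1, ⟨G.inv z.1, G.src_inv z.1⟩,
        ⟦(a.symm.map (G.leftTransl hL (G.inv z.1) (G.src_inv z.1)
          ((G.tgt_inv z.1).trans z.2)).continuous).cast
          (G.leftTransl_inv_self hL z).symm (G.leftTransl_inv_idm hL z).symm⟧⟩ :=
  rfl

theorem monComp_fst (m n : MonM G) : (G.monComp hL m n).1 = m.1 := by
  unfold monComp; split <;> rfl

theorem monComp_endpoint {m n : MonM G} (h : G.tgt m.2.1.1 = n.1) :
    (G.monComp hL m n).2.1.1 = G.comp m.2.1.1 n.2.1.1 := by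
  rw [monComp, dif_pos h]; rfl

theorem monComp_assoc {m n k : MonM G} (hmn : G.tgt m.2.1.1 = n.1) (hnk : G.tgt n.2.1.1 = k.1) :
    G.monComp hL (G.monComp hL m n) k = G.monComp hL m (G.monComp hL n k) := by
  obtain ⟨x, z, a⟩ := m
  obtain ⟨y, r, b⟩ := n
  obtain ⟨w, s, c⟩ := k
  dsimp only at hmn hnk
  subst hmn hnk
  refine Quotient.inductionOn₃ a b c fun a b c => ?_
  rw [G.monComp_mk hL z r a b rfl, G.monComp_mk hL r s b c rfl,
    G.monComp_mk hL _ s _ c (G.tgt_comp z.1 r.1 r.2.symm), G.monComp_mk hL z _ a _ rfl]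
  refine (MonM.mk_eq_mk_of_homotopic ⟨.transAssoc _ _ _⟩).trans (MonM.mk_eq_mk_of_val ?_)
  exact Path.apply_trans_congr Subtype.val Subtype.val (fun _ => rfl)
    (Path.apply_trans_congr Subtype.val (fun w => (G.leftTransl hL z.1 z.2 rfl w).1)
      (fun _ => rfl) fun t => G.comp_assoc _ _ _ r.2.symm (c t).2.symm)

theorem monId_monComp (m : MonM G) : G.monComp hL (G.monId m.1) m = m := by
  obtain ⟨x, z, a⟩ := m
  refine Quotient.inductionOn a fun a => ?_
  rw [monId, G.monComp_mk hL (G.idm x) z _ a (G.tgt_e x)]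
  refine (MonM.mk_eq_mk_of_val (P' := (Path.refl _).trans a) ?_).trans
    (MonM.mk_eq_mk_of_homotopic ⟨.reflTrans a⟩)
  exact Path.apply_trans_congr Subtype.val Subtype.val (fun _ => rfl)
    fun t => G.e_comp_of_src_eq (a t).2

theorem monComp_monId (m : MonM G) : G.monComp hL m (G.monId (G.tgt m.2.1.1)) = m := by
  obtain ⟨x, z, a⟩ := m
  refine Quotient.inductionOn a fun a => ?_
  rw [monId, G.monComp_mk hL z _ a _ rfl]
  refine (MonM.mk_eq_mk_of_val (P' := a.trans (Path.refl z)) ?_).trans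
    (MonM.mk_eq_mk_of_homotopic ⟨.transRefl a⟩)
  exact Path.apply_trans_congr Subtype.val Subtype.val (fun _ => rfl)
    fun _ => G.comp_id z.1

theorem monComp_monInv (m : MonM G) : G.monComp hL m (G.monInv hL m) = G.monId m.1 := by
  obtain ⟨x, z, a⟩ := m
  refine Quotient.inductionOn a fun a => ?_
  rw [monInv_mk, G.monComp_mk hL z _ a _ rfl, monId]
  refine (MonM.mk_eq_mk_of_val (P' := a.trans a.symm) ?_).trans
    (MonM.mk_eq_mk_of_homotopic ⟨(Path.Homotopy.reflTransSymm a).symm⟩)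
  exact Path.apply_trans_congr Subtype.val Subtype.val (fun _ => rfl)
    fun t => G.comp_inv_comp_cancel z.2 (a.symm t).2

theorem monInv_monComp (m : MonM G) :
    G.monComp hL (G.monInv hL m) m = G.monId (G.tgt m.2.1.1) := by
  obtain ⟨x, z, a⟩ := m
  refine Quotient.inductionOn a fun a => ?_
  set T := G.leftTransl hL (G.inv z.1) (G.src_inv z.1) ((G.tgt_inv z.1).trans z.2)
  have hT := G.leftTransl_inv_self hL z
  rw [monInv_mk, G.monComp_mk hL ⟨G.inv z.1, G.src_inv z.1⟩ z _ a ((G.tgt_inv z.1).trans z.2),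
    monId]
  calc _ = (⟨_, _, ⟦((a.symm.trans a).map T.continuous).cast hT.symm hT.symm⟧⟩ : MonM G) :=
        MonM.mk_eq_mk_of_val
          (Path.apply_trans_congr Subtype.val (fun w => (T w).1) (fun _ => rfl) fun _ => rfl)
    _ = ⟨_, _, ⟦((Path.refl z).map T.continuous).cast hT.symm hT.symm⟧⟩ :=
        MonM.mk_eq_mk_of_homotopic
          ((Path.Homotopic.map ⟨(Path.Homotopy.reflSymmTrans a).symm⟩ T).pathCast _ _)
    _ = _ := MonM.mk_eq_mk_of_val (P' := Path.refl _) fun _ => G.inv_comp z.1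

theorem monComp_mk_of_val {x : O} (q : G.star x) (a : Path (G.idm x) q)
    (r : G.star (G.tgt q.1)) (b : Path (G.idm (G.tgt q.1)) r) {s : G.star x} (c : Path q s)
    (hc : ∀ t, (c t).1 = G.comp q.1 (b t).1) :
    G.monComp hL ⟨x, q, ⟦a⟧⟩ ⟨G.tgt q.1, r, ⟦b⟧⟩ = ⟨x, s, ⟦a.trans c⟧⟩ := by
  rw [G.monComp_mk hL q r a b rfl]
  exact MonM.mk_eq_mk_of_val
    (Path.apply_trans_congr Subtype.val Subtype.val (fun _ => rfl) fun t => (hc t).symm)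

noncomputable def monodromyGroupoid : Grpd' O (MonM G) where
  src m := m.1
  tgt m := G.tgt m.2.1.1
  e := G.monId
  comp := G.monComp hL
  inv := G.monInv hL
  src_e _ := rfl
  tgt_e := G.tgt_e
  src_comp m n _ := G.monComp_fst hL m n
  tgt_comp m n h := by
    rw [G.monComp_endpoint hL h]; exact G.tgt_comp _ _ (h.trans n.2.1.2.symm)
  comp_assoc _ _ _ := G.monComp_assoc hL
  id_comp := G.monId_monComp hL
  comp_id := G.monComp_monId hL
  src_inv _ := rfl
  tgt_inv m := (G.tgt_inv _).trans m.2.1.2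
  comp_inv := G.monComp_monInv hL
  inv_comp := G.monInv_monComp hL

end Grpd'

/-- Let `G` be a star topological groupoid (all left translations being
homeomorphisms).  Then `Mon(G)`, with composition
`[a] • [b] = [a ⋆ (a(1) ∘ b)]`, is a groupoid with the same objects as `G`,
and the endpoint map `p : Mon(G) → G`, `[a] ↦ a(1)`, is a morphism of
groupoids which is the identity on objects. -/
theorem monodromy_groupoid_projection_is_morphism
    {O M : Type*} (G : Grpd' O M)
    [∀ x : O, TopologicalSpace {m : M // G.src m = x}]
    (hL : ∀ (g : M) (x : O) (hg : G.src g = x),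
      Continuous (fun h : G.star (G.tgt g) =>
        (⟨G.comp g h.1, by rw [G.src_comp g h.1 h.2.symm, hg]⟩ : G.star x))) :
    ∃ MG : Grpd' O (MonM G),
      (∀ m : MonM G, MG.src m = m.1) ∧
      (∀ m : MonM G, MG.tgt m = G.tgt m.2.1.1) ∧
      (∀ x : O, MG.e x = ⟨x, G.idm x, ⟦Path.refl (G.idm x)⟧⟩) ∧
      -- the composition is [a] • [b] = [a ⋆ (a(1) ∘ b)]
      (∀ (x : O) (q : G.star x) (a : Path (G.idm x) q)
        (r : G.star (G.tgt q.1)) (b : Path (G.idm (G.tgt q.1)) r)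
        (c : Path q (⟨G.comp q.1 r.1, by
            rw [G.src_comp q.1 r.1 r.2.symm]; exact q.2⟩ : G.star x)),
        (∀ t, (c t).1 = G.comp q.1 (b t).1) →
        MG.comp ⟨x, q, ⟦a⟧⟩ ⟨G.tgt q.1, r, ⟦b⟧⟩ =
          ⟨x, ⟨G.comp q.1 r.1, by
            rw [G.src_comp q.1 r.1 r.2.symm]; exact q.2⟩, ⟦a.trans c⟧⟩) ∧
      -- p is a morphism of groupoids which is the identity on objects
      (∀ m : MonM G, G.src (monProj G m) = MG.src m) ∧
      (∀ m : MonM G, G.tgt (monProj G m) = MG.tgt m) ∧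
      (∀ m n : MonM G, MG.tgt m = MG.src n →
        monProj G (MG.comp m n) = G.comp (monProj G m) (monProj G n)) ∧
      (∀ x : O, monProj G (MG.e x) = G.e x) := by
  exact ⟨G.monodromyGroupoid hL, fun _ => rfl, fun _ => rfl, fun _ => rfl,
    fun x q a r b c => G.monComp_mk_of_val hL q a r b c, fun m => m.2.1.2, fun _ => rfl,
    fun _ _ => G.monComp_endpoint hL, fun _ => rfl⟩
end
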